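/- arXiv:1811.02039 — 2 statements merged into one kernel-verified Lean document; each statement's English description precedes it below -/
import Mathlib

section
/- For every partition λ of n with λ ≠ (n), the partition (n−1,1) dominates λ, and consequently for any θ > 1 the Ewens chain eigenvalue β_{(n−1,1)} = (θ−1)/(θ+n−1) is the second largest eigenvalue: β_{(n−1,1)} ≥ β_λ for all λ ⊢ n with λ ≠ (n). -/
open Finset

/-- Young diagram of a partition -/
def toYD {n : ℕ} (p : Nat.Partition n) : YoungDiagram :=
  YoungDiagram.ofRowLens (p.parts.sort (· ≥ ·)) (List.sortedGE_iff_pairwise.mpr (p.parts.pairwise_sort (· ≥ ·)))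

/-- dominance order on partitions of `n` -/
def Dominates {n : ℕ} (p q : Nat.Partition n) : Prop :=
  ∀ j, ((q.parts.sort (· ≥ ·)).take j).sum ≤ ((p.parts.sort (· ≥ ·)).take j).sum

/-- the Ewens eigenvalue `β_λ = ∏_{i=1}^n (θ + c^λ(i))/(θ + i − 1)` of the partition
with Young diagram `Y`. -/
noncomputable def ewensEig (θ : ℝ) (n : ℕ) (Y : YoungDiagram) : ℝ :=
  (∏ b ∈ Y.cells, (θ + b.2 - b.1)) / ∏ j ∈ Finset.range n, (θ + j)

/-!
Read row by row, the content product of the diagram with rows `a₀, a₁, …` factors as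
`x (x+1) ⋯ (x+a₀-1)` times the content product of the rows `a₁, a₂, …` at `x - 1`, since moving
down one row lowers every content by one. Hence if `|x| ≤ y`, the rows contribute in absolute
value at most consecutive blocks of `y (y+1) (y+2) ⋯`. For a partition with at least two rows,
the first row gives exactly `θ ⋯ (θ+a₀-1)`, the second row starts with the factor `θ - 1`, and
every other factor is bounded by one of `θ + a₀, …, θ + n - 2`: the total is at most the content
product `(θ-1) θ ⋯ (θ+n-2)` of the hook `(n-1, 1)`. Dominance by `(n-1, 1)` only needs that the
largest part of such a partition is at most `n - 1`.
-/
noncomputable def contentProd (x : ℝ) (w : List ℕ) : ℝ :=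
  ∏ c ∈ YoungDiagram.cellsOfRowLens w, (x + c.2 - c.1)

@[simp]
lemma contentProd_nil (x : ℝ) : contentProd x [] = 1 := rfl

lemma contentProd_cons (x : ℝ) (a : ℕ) (w : List ℕ) :
    contentProd x (a :: w) = (∏ j ∈ range a, (x + j)) * contentProd (x - 1) w := by
  have hdisj : Disjoint (({0} : Finset ℕ) ×ˢ range a)
      ((YoungDiagram.cellsOfRowLens w).map
        (.prodMap ⟨_, Nat.succ_injective⟩ (.refl ℕ))) := by
    simp only [disjoint_left, mem_product, mem_singleton, mem_map]
    rintro _ ⟨h0, -⟩ ⟨c, -, rfl⟩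
    simp at h0
  rw [contentProd, YoungDiagram.cellsOfRowLens, prod_union hdisj, prod_map, prod_product,
    prod_singleton, contentProd]
  congr 1
  · simp
  · refine prod_congr rfl fun c _ => ?_
    simp only [Function.Embedding.coe_prodMap, Prod.map_fst, Prod.map_snd,
      Function.Embedding.coeFn_mk, Function.Embedding.refl_apply, Nat.succ_eq_add_one]
    push_cast
    ring

lemma prod_range_add_natCast (x : ℝ) (m k : ℕ) :
    ∏ j ∈ range (m + k), (x + j) = (∏ j ∈ range m, (x + j)) * ∏ j ∈ range k, (x + m + j) := by
  rw [prod_range_add]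
  push_cast
  simp only [add_assoc]

lemma abs_prod_range_add_le {x y : ℝ} (h : |x| ≤ y) (m : ℕ) :
    |∏ j ∈ range m, (x + j)| ≤ ∏ j ∈ range m, (y + j) := by
  rw [abs_prod]
  refine prod_le_prod (fun _ _ => abs_nonneg _) fun j _ => ?_
  calc |x + j| ≤ |x| + j := by simpa using abs_add_le x (j : ℝ)
    _ ≤ y + j := by linarith

lemma abs_contentProd_le {w : List ℕ} (hw : ∀ a ∈ w, 0 < a) {x y : ℝ} (h : |x| ≤ y) :
    |contentProd x w| ≤ ∏ j ∈ range w.sum, (y + j) := by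
  induction w generalizing x y with
  | nil => simp
  | cons a w ih =>
    have ha : 1 ≤ (a : ℝ) := by exact_mod_cast hw a (by simp)
    have hx : |x - 1| ≤ y + a := by
      linarith [abs_sub x 1, abs_one (α := ℝ)]
    rw [contentProd_cons, List.sum_cons, prod_range_add_natCast, abs_mul]
    exact mul_le_mul (abs_prod_range_add_le h a)
      (ih (fun c hc => hw c (by simp [hc])) hx) (abs_nonneg _)
      (prod_nonneg fun j _ => by have := (abs_nonneg x).trans h; positivity)

lemma contentProd_hook (x : ℝ) (m : ℕ) :
    contentProd x [m, 1] = (∏ j ∈ range m, (x + j)) * (x - 1) := by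
  simp [contentProd_cons]

lemma contentProd_le_hook {θ : ℝ} (hθ : 1 ≤ θ) (a b : ℕ) {w : List ℕ} (hw : ∀ c ∈ w, 0 < c) :
    contentProd θ (a :: (b + 1) :: w) ≤ contentProd θ [a + b + w.sum, 1] := by
  have hsecond : ∏ j ∈ range (b + 1), (θ - 1 + j) = (θ - 1) * ∏ j ∈ range b, (θ + j) := by
    rw [prod_range_succ', mul_comm]
    push_cast
    ring_nf
  have hmid : ∏ j ∈ range b, (θ + j) ≤ ∏ j ∈ range b, (θ + a + j) :=
    prod_le_prod (fun j _ => by positivity) fun j _ => by simp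
  have hrest : |contentProd (θ - 1 - 1) w| ≤ ∏ j ∈ range w.sum, (θ + ↑(a + b) + j) := by
    refine abs_contentProd_le hw (abs_le.mpr ⟨?_, ?_⟩) <;> push_cast <;> linarith
  calc contentProd θ (a :: (b + 1) :: w)
      = ((∏ j ∈ range a, (θ + j)) * (θ - 1)) *
          ((∏ j ∈ range b, (θ + j)) * contentProd (θ - 1 - 1) w) := by
        rw [contentProd_cons, contentProd_cons, hsecond]; ring
    _ ≤ ((∏ j ∈ range a, (θ + j)) * (θ - 1)) *
          ((∏ j ∈ range b, (θ + a + j)) * ∏ j ∈ range w.sum, (θ + ↑(a + b) + j)) := by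
        have hθb : 0 ≤ ∏ j ∈ range b, (θ + j) := prod_nonneg fun j _ => by positivity
        have hθa : 0 ≤ ∏ j ∈ range a, (θ + j) := prod_nonneg fun j _ => by positivity
        refine mul_le_mul_of_nonneg_left ((le_abs_self _).trans ?_) (by nlinarith)
        rw [abs_mul, abs_of_nonneg hθb]
        exact mul_le_mul hmid hrest (abs_nonneg _) (prod_nonneg fun j _ => by positivity)
    _ = contentProd θ [a + b + w.sum, 1] := by
        rw [contentProd_hook, prod_range_add_natCast, prod_range_add_natCast]; ring

namespace Nat.Partition

variable {n : ℕ}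

lemma sum_sort (q : n.Partition) : (q.parts.sort (· ≥ ·)).sum = n := by
  rw [← Multiset.sum_coe, Multiset.sort_eq, q.parts_sum]

lemma exists_sort_eq_cons_cons {q : n.Partition} (hq : q ≠ indiscrete n) :
    ∃ a b w, q.parts.sort (· ≥ ·) = a :: (b + 1) :: w ∧ (∀ c ∈ w, 0 < c) ∧
      a + b + w.sum + 1 = n := by
  have hpos : ∀ c ∈ q.parts.sort (· ≥ ·), 0 < c :=
    fun c hc => q.parts_pos ((Multiset.mem_sort _).mp hc)
  have hparts : ↑(q.parts.sort (· ≥ ·)) = q.parts := Multiset.sort_eq _ _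
  have hsum := q.sum_sort
  rcases h : q.parts.sort (· ≥ ·) with _ | ⟨a, _ | ⟨b, w⟩⟩ <;> rw [h] at hpos hparts hsum
  · obtain rfl : n = 0 := hsum.symm
    exact absurd (Subsingleton.elim _ _) hq
  · obtain rfl : a = n := by simpa using hsum
    refine absurd (Nat.Partition.ext ?_) hq
    rw [← hparts, indiscrete_parts (hpos a (by simp)).ne']
    rfl
  · obtain ⟨b, rfl⟩ := Nat.exists_eq_add_one_of_ne_zero (hpos b (by simp)).ne'
    refine ⟨a, b, w, rfl, fun c hc => hpos c (by simp [hc]), ?_⟩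
    simp only [List.sum_cons] at hsum
    omega

end Nat.Partition

lemma sort_parts_eq_hook {n : ℕ} (hn : 2 ≤ n) {p : n.Partition} (hp : p.parts = {n - 1, 1}) :
    p.parts.sort (· ≥ ·) = [n - 1, 1] := by
  have hge : ∀ b ∈ ({1} : Multiset ℕ), n - 1 ≥ b := by
    simp only [Multiset.mem_singleton, forall_eq]
    omega
  rw [hp, Multiset.insert_eq_cons, Multiset.sort_cons _ _ _ hge, Multiset.sort_singleton]

lemma dominates_of_sort_eq_hook {n : ℕ} {p q : n.Partition}
    (hp : p.parts.sort (· ≥ ·) = [n - 1, 1]) (hq : q ≠ .indiscrete n) : Dominates p q := by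
  obtain ⟨a, b, w, hq', -, hsum⟩ := Nat.Partition.exists_sort_eq_cons_cons hq
  intro j
  rw [hp, hq']
  match j with
  | 0 => simp
  | 1 => simp only [List.take_succ_cons, List.take_zero, List.sum_cons, List.sum_nil]; omega
  | j + 2 =>
    have := (List.take_sublist j w).sum_le_sum fun _ _ => Nat.zero_le _
    simp only [List.take_succ_cons, List.sum_cons, List.take_nil, List.sum_nil]; omega

lemma ewensEig_toYD (θ : ℝ) {n : ℕ} (q : n.Partition) :
    ewensEig θ n (toYD q) = contentProd θ (q.parts.sort (· ≥ ·)) / ∏ j ∈ range n, (θ + j) := rfl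

lemma ewensEig_of_sort_eq_hook {θ : ℝ} (hθ : 0 < θ) {n : ℕ} (hn : 1 ≤ n) {p : n.Partition}
    (hp : p.parts.sort (· ≥ ·) = [n - 1, 1]) :
    ewensEig θ n (toYD p) = (θ - 1) / (θ + n - 1) := by
  obtain ⟨m, rfl⟩ := Nat.exists_eq_add_of_le' hn
  have hprod : ∏ j ∈ range m, (θ + j) ≠ 0 := prod_ne_zero_iff.mpr fun j _ => by positivity
  rw [ewensEig_toYD, hp, Nat.add_sub_cancel, contentProd_hook, prod_range_succ,
    mul_div_mul_left _ _ hprod]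
  push_cast
  ring

lemma ewensEig_le_of_sort_eq_hook {θ : ℝ} (hθ : 1 ≤ θ) {n : ℕ} {p q : n.Partition}
    (hp : p.parts.sort (· ≥ ·) = [n - 1, 1]) (hq : q ≠ .indiscrete n) :
    ewensEig θ n (toYD q) ≤ ewensEig θ n (toYD p) := by
  obtain ⟨a, b, w, hq', hw, hsum⟩ := Nat.Partition.exists_sort_eq_cons_cons hq
  rw [ewensEig_toYD, ewensEig_toYD, hp, hq', show n - 1 = a + b + w.sum by omega]
  exact div_le_div_of_nonneg_right (contentProd_le_hook hθ a b hw)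
    (prod_nonneg fun j _ => by positivity)

/-- The partition `(n−1,1)` dominates every partition of `n` other than `(n)`, and
consequently for `θ > 1` the eigenvalue `β_{(n−1,1)} = (θ−1)/(θ+n−1)` is the second
largest Ewens eigenvalue. -/
theorem stmt7 (n : ℕ) (hn : 2 ≤ n) (θ : ℝ) (hθ : 1 < θ)
    (p : Nat.Partition n) (hp : p.parts = {n - 1, 1}) :
    (∀ q : Nat.Partition n, q ≠ Nat.Partition.indiscrete n → Dominates p q) ∧
    ewensEig θ n (toYD p) = (θ - 1) / (θ + n - 1) ∧
    (∀ q : Nat.Partition n, q ≠ Nat.Partition.indiscrete n →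
      ewensEig θ n (toYD q) ≤ ewensEig θ n (toYD p)) := by
  have hsort := sort_parts_eq_hook hn hp
  exact ⟨fun q hq => dominates_of_sort_eq_hook hsort hq,
    ewensEig_of_sort_eq_hook (by linarith) (by omega) hsort,
    fun q hq => ewensEig_le_of_sort_eq_hook hθ.le hsort hq⟩
end

section
/- For partitions λ of n with prescribed first two parts λ_1, λ_2, Σ_{λ=(λ_1,λ_2,…)} d_λ² ≤ C(n,λ_1)² · C(n−λ_1, λ_2)² · (n − λ_1 − λ_2)!. -/
/-!
A standard tableau of shape `λ ⊢ n` is a linear extension of the cells of `λ` under the product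
order. Recording the set of numbers in the first row and standardizing the numbering of the
remaining cells is injective, so `d_λ ≤ C(n, λ₁) d_{λ'}` where `λ'` is `λ` without its first
row; doing this twice bounds `d_λ` by `C(n, λ₁) C(n - λ₁, λ₂) d_μ` for `μ = (λ₃, λ₄, …)`, and `μ`
determines `λ` once `λ₁, λ₂` are fixed. It remains to show `∑_{μ ⊢ m} d_μ² = m!`. Removing the
cell numbered last gives the branching rule `d_λ = ∑_{ν ⋖ λ} d_ν`; together with the
differential-poset identities of Young's lattice (a diagram has one more upper cover than lower
covers, two distinct diagrams of the same size have as many common upper covers as common lower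
covers) it yields `∑_{ρ ⋗ μ} d_ρ = (|μ| + 1) d_μ`, and then the identity by induction on `m`.
-/

open Finset

/-- largest part of a partition -/
def firstPart {n : ℕ} (p : Nat.Partition n) : ℕ := (p.parts.sort (· ≥ ·)).headI

/-- second largest part of a partition (0 if there is only one part) -/
def secondPart {n : ℕ} (p : Nat.Partition n) : ℕ := ((p.parts.sort (· ≥ ·)).drop 1).headI

/-- number of standard Young tableaux of shape `Y` (the dimension `d_λ`) -/
def sytCard (Y : YoungDiagram) : ℕ :=
  Fintype.card {f : (↥Y.cells) ≃ Fin Y.cells.card //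
    (∀ a b : Y.cells, (a : ℕ × ℕ).1 = (b : ℕ × ℕ).1 → (a : ℕ × ℕ).2 < (b : ℕ × ℕ).2 →
      f a < f b) ∧
    (∀ a b : Y.cells, (a : ℕ × ℕ).2 = (b : ℕ × ℕ).2 → (a : ℕ × ℕ).1 < (b : ℕ × ℕ).1 →
      f a < f b)}

/-! ### Linear extensions of a finite poset -/

namespace Finset

theorem sum_sum_eq_sum_card_filter_mul {ι κ : Type*} [DecidableEq κ] {s : Finset ι}
    {t : ι → Finset κ} {u : Finset κ} (h : ∀ i ∈ s, t i ⊆ u) (f : κ → ℕ) :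
    ∑ i ∈ s, ∑ j ∈ t i, f j = ∑ j ∈ u, {i ∈ s | j ∈ t i}.card * f j := by
  rw [sum_comm' (t' := u) (s' := fun j => {i ∈ s | j ∈ t i})]
  · simp_rw [sum_const, smul_eq_mul]
  · intro i j
    simp only [mem_filter]
    exact ⟨fun ⟨hi, hj⟩ => ⟨⟨hi, hj⟩, h i hi hj⟩, fun ⟨hij, _⟩ => hij⟩

variable {α β : Type*} [PartialOrder α] [PartialOrder β]

abbrev LinearExtension (s : Finset α) : Type _ := {f : s ≃ Fin s.card // StrictMono f}

noncomputable def numLinearExtensions (s : Finset α) : ℕ := Nat.card s.LinearExtension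

theorem numLinearExtensions_empty : (∅ : Finset α).numLinearExtensions = 1 := by
  rw [numLinearExtensions, Nat.card_eq_one_iff_unique]
  have : IsEmpty (Fin (∅ : Finset α).card) := by rw [card_empty]; infer_instance
  exact ⟨⟨fun f g => Subtype.ext (Equiv.ext isEmptyElim)⟩,
    ⟨⟨Equiv.equivOfIsEmpty _ _, isEmptyElim⟩⟩⟩

theorem numLinearExtensions_map (φ : α ↪o β) (s : Finset α) :
    (s.map φ.toEmbedding).numLinearExtensions = s.numLinearExtensions := by
  refine Nat.card_congr (Equiv.subtypeEquiv
    (Equiv.equivCongr (s.equivMap φ.toEmbedding).symm (finCongr (card_map _))) fun f => ?_)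
  have hlt : ∀ x y : s, s.equivMap φ.toEmbedding x < s.equivMap φ.toEmbedding y ↔ x < y :=
    fun x y => φ.lt_iff_lt
  constructor
  · exact fun hf x y hxy => hf ((hlt x y).2 hxy)
  · intro hf x y hxy
    obtain ⟨x, rfl⟩ := (s.equivMap φ.toEmbedding).surjective x
    obtain ⟨y, rfl⟩ := (s.equivMap φ.toEmbedding).surjective y
    simpa using hf ((hlt x y).1 hxy)

theorem numLinearExtensions_le_one {t : Finset α} (ht : IsChain (· ≤ ·) (t : Set α)) :
    t.numLinearExtensions ≤ 1 := by
  rw [numLinearExtensions, Finite.card_le_one_iff_subsingleton]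
  refine ⟨fun f g => ?_⟩
  have toOrderIso : ∀ e : t.LinearExtension, ∃ φ : t ≃o Fin t.card, φ.toEquiv = e.1 := by
    refine fun e => ⟨⟨e.1, fun {a b} => ⟨fun h => ?_, fun h => e.2.monotone h⟩⟩, rfl⟩
    rcases ht.total a.2 b.2 with hab | hba
    · exact hab
    · rcases (Subtype.coe_le_coe.1 hba).eq_or_lt with rfl | hlt
      · exact le_rfl
      · exact absurd (e.2 hlt) (not_lt.2 h)
  obtain ⟨φ, hφ⟩ := toOrderIso f
  obtain ⟨ψ, hψ⟩ := toOrderIso g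
  exact Subtype.ext (hφ ▸ hψ ▸ congrArg RelIso.toEquiv (Subsingleton.elim φ ψ))

noncomputable def equivFinOfInjective {s : Finset α} {k : ℕ} (f : s → Fin k)
    (hf : Function.Injective f) (hk : s.card = k) : s ≃ Fin k :=
  Equiv.ofBijective f ((Fintype.bijective_iff_injective_and_card f).2 ⟨hf, by simp [hk]⟩)

variable [DecidableEq α] {s : Finset α} {x : α}

noncomputable def LinearExtension.eraseLast (f : s.LinearExtension) (hx : x ∈ s)
    (hf : (f.1 ⟨x, hx⟩ : ℕ) = (s.erase x).card) : (s.erase x).LinearExtension := by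
  have hlt : ∀ y : s.erase x, (f.1 ⟨y, mem_of_mem_erase y.2⟩ : ℕ) < (s.erase x).card := by
    intro y
    have hne : f.1 ⟨y, mem_of_mem_erase y.2⟩ ≠ f.1 ⟨x, hx⟩ := fun h =>
      ne_of_mem_erase y.2 (congrArg Subtype.val (f.1.injective h))
    have := (f.1 ⟨y, mem_of_mem_erase y.2⟩).2
    have := card_erase_add_one hx
    have := Fin.val_ne_of_ne hne
    omega
  refine ⟨equivFinOfInjective (fun y => ⟨_, hlt y⟩) (fun y z h => ?_) rfl,
    fun y z h => f.2 (show (⟨y, _⟩ : s) < ⟨z, _⟩ from h)⟩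
  simp only [Fin.mk.injEq] at h
  exact Subtype.ext (Subtype.mk.inj (f.1.injective (Fin.ext h)))

noncomputable def LinearExtension.insertLast (g : (s.erase x).LinearExtension) (hx : x ∈ s)
    (hmax : ∀ y ∈ s, x ≤ y → y = x) : s.LinearExtension := by
  have hcard := card_erase_add_one hx
  let v : s → ℕ := fun y => if hy : (y : α) = x then (s.erase x).card
    else g.1 ⟨y, mem_erase.2 ⟨hy, y.2⟩⟩
  have hv : ∀ y : s, (y : α) ≠ x → v y < (s.erase x).card := fun y hy => by simp [v, hy]
  have hvx : ∀ y : s, (y : α) = x → v y = (s.erase x).card := fun y hy => by simp [v, hy]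
  have hvne : ∀ y z : s, (y : α) ≠ x → (z : α) ≠ x → v y = v z → y = z := by
    intro y z hy hz h
    simp only [v, hy, hz, dite_false] at h
    exact Subtype.ext (congrArg Subtype.val (g.1.injective (Fin.ext h)) :)
  refine ⟨equivFinOfInjective (fun y => ⟨v y, ?_⟩) (fun y z h => ?_) rfl, fun y z h => ?_⟩
  · by_cases hy : (y : α) = x
    · rw [hvx y hy]; omega
    · have := hv y hy; omega
  · have h : v y = v z := congrArg Fin.val h
    by_cases hy : (y : α) = x <;> by_cases hz : (z : α) = x
    · exact Subtype.ext (hy.trans hz.symm)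
    · have := hv z hz; rw [hvx y hy] at h; omega
    · have := hv y hy; rw [hvx z hz] at h; omega
    · exact hvne y z hy hz h
  · change v y < v z
    by_cases hz : (z : α) = x
    · have hy : (y : α) ≠ x := hz ▸ (Subtype.coe_lt_coe.2 h).ne
      rw [hvx z hz]
      exact hv y hy
    · by_cases hy : (y : α) = x
      · exact absurd (hmax z z.2 (hy ▸ h.le)) hz
      · simp only [v, hy, hz, dite_false, Fin.val_fin_lt]
        exact g.2 (show (⟨y, _⟩ : s.erase x) < ⟨z, _⟩ from h)

theorem LinearExtension.insertLast_apply_self (g : (s.erase x).LinearExtension) (hx : x ∈ s)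
    (hmax : ∀ y ∈ s, x ≤ y → y = x) :
    ((g.insertLast hx hmax).1 ⟨x, hx⟩ : ℕ) = (s.erase x).card := by
  simp [LinearExtension.insertLast, equivFinOfInjective]

theorem LinearExtension.insertLast_apply_of_ne (g : (s.erase x).LinearExtension) (hx : x ∈ s)
    (hmax : ∀ y ∈ s, x ≤ y → y = x) (y : s) (hy : (y : α) ≠ x) :
    ((g.insertLast hx hmax).1 y : ℕ) = g.1 ⟨y, mem_erase.2 ⟨hy, y.2⟩⟩ := by
  simp [LinearExtension.insertLast, equivFinOfInjective, hy]

noncomputable def linearExtensionEquivErase (hx : x ∈ s) (hmax : ∀ y ∈ s, x ≤ y → y = x) :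
    {f : s.LinearExtension // (f.1 ⟨x, hx⟩ : ℕ) = (s.erase x).card} ≃
      (s.erase x).LinearExtension where
  toFun f := f.1.eraseLast hx f.2
  invFun g := ⟨g.insertLast hx hmax, g.insertLast_apply_self hx hmax⟩
  left_inv f := by
    refine Subtype.ext <| Subtype.ext <| Equiv.ext fun y => Fin.ext ?_
    by_cases hy : (y : α) = x
    · obtain rfl : y = ⟨x, hx⟩ := Subtype.ext hy
      exact (LinearExtension.insertLast_apply_self _ hx hmax).trans f.2.symm
    · exact LinearExtension.insertLast_apply_of_ne _ hx hmax y hy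
  right_inv g := Subtype.ext <| Equiv.ext fun y => Fin.ext <|
    LinearExtension.insertLast_apply_of_ne _ hx hmax _ (ne_of_mem_erase y.2)

def LinearExtension.last (f : s.LinearExtension) (hs : s.Nonempty) : α :=
  f.1.symm ⟨s.card - 1, Nat.sub_lt hs.card_pos one_pos⟩

theorem LinearExtension.last_eq_iff (f : s.LinearExtension) (hs : s.Nonempty) (hx : x ∈ s) :
    f.last hs = x ↔ (f.1 ⟨x, hx⟩ : ℕ) = (s.erase x).card := by
  have hcard := card_erase_add_one hx
  change ((f.1.symm _ : s) : α) = ((⟨x, hx⟩ : s) : α) ↔ _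
  rw [← Subtype.ext_iff, Equiv.symm_apply_eq, Fin.ext_iff]
  constructor <;> intro h <;> simp only at h ⊢ <;> omega

section Restrict

variable {t : Finset α}

def LinearExtension.numbersOf (f : s.LinearExtension) (t : Finset α) : Finset (Fin s.card) :=
  {k | (f.1.symm k : α) ∈ t}

theorem LinearExtension.mem_numbersOf {f : s.LinearExtension} {k : Fin s.card} :
    k ∈ f.numbersOf t ↔ (f.1.symm k : α) ∈ t := mem_filter.trans (and_iff_right (mem_univ k))

theorem LinearExtension.card_numbersOf (f : s.LinearExtension) (hts : t ⊆ s) :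
    (f.numbersOf t).card = t.card := by
  refine card_bij' (fun k _ => (f.1.symm k : α)) (fun y hy => f.1 ⟨y, hts hy⟩)
    (fun k hk => mem_numbersOf.1 hk) (fun y hy => by simpa [mem_numbersOf] using hy)
    (fun k _ => by simp) (fun y _ => by simp)

theorem LinearExtension.numbersOf_sdiff (f : s.LinearExtension) :
    f.numbersOf (s \ t) = (f.numbersOf t)ᶜ := by
  ext k
  simp [mem_numbersOf]

/-- The standardization of `f` on `t`: the elements of `t` are renumbered by `0, …, #t - 1`
in the order of their numbers under `f`. -/
noncomputable def LinearExtension.restrict (f : s.LinearExtension) (hts : t ⊆ s) :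
    t.LinearExtension :=
  let e := (f.numbersOf t).orderIsoOfFin (f.card_numbersOf hts)
  have hmem (y : t) : f.1 ⟨y, hts y.2⟩ ∈ f.numbersOf t := by simp [mem_numbersOf]
  ⟨equivFinOfInjective (fun y => e.symm ⟨_, hmem y⟩)
    (fun y z h => Subtype.ext
      (Subtype.mk.inj (f.1.injective (Subtype.mk.inj (e.symm.injective h)))))
    rfl,
   fun y z h => e.symm.strictMono (f.2 (show (⟨y, _⟩ : s) < ⟨z, _⟩ from h))⟩

theorem LinearExtension.orderEmbOfFin_restrict (f : s.LinearExtension) (hts : t ⊆ s)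
    (h : (f.numbersOf t).card = t.card) (y : t) :
    (f.numbersOf t).orderEmbOfFin h ((f.restrict hts).1 y) = f.1 ⟨y, hts y.2⟩ := by
  rw [← coe_orderIsoOfFin_apply]
  exact congrArg Subtype.val (OrderIso.apply_symm_apply _ _)

theorem LinearExtension.eq_of_restrict_eq {f g : s.LinearExtension} (hts : t ⊆ s)
    (hnum : f.numbersOf t = g.numbersOf t) (ht : f.restrict hts = g.restrict hts)
    (hst : f.restrict (sdiff_subset (t := t)) = g.restrict sdiff_subset) : f = g := by
  refine Subtype.ext (Equiv.ext fun ⟨y, hy⟩ => ?_)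
  by_cases hyt : y ∈ t
  · rw [← f.orderEmbOfFin_restrict hts (f.card_numbersOf hts) ⟨y, hyt⟩,
      ← g.orderEmbOfFin_restrict hts (g.card_numbersOf hts) ⟨y, hyt⟩, ht]
    simp_rw [hnum]
  · have hyst : y ∈ s \ t := mem_sdiff.2 ⟨hy, hyt⟩
    rw [← f.orderEmbOfFin_restrict sdiff_subset (f.card_numbersOf sdiff_subset) ⟨y, hyst⟩,
      ← g.orderEmbOfFin_restrict sdiff_subset (g.card_numbersOf sdiff_subset) ⟨y, hyst⟩, hst]
    simp_rw [numbersOf_sdiff, hnum]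

theorem numLinearExtensions_le_choose_mul (hts : t ⊆ s) :
    s.numLinearExtensions ≤
      s.card.choose t.card * t.numLinearExtensions * (s \ t).numLinearExtensions := by
  have := Nat.card_le_card_of_injective
    (fun f : s.LinearExtension => ((⟨f.numbersOf t, f.card_numbersOf hts⟩ :
      {A : Finset (Fin s.card) // A.card = t.card}), f.restrict hts,
      f.restrict (sdiff_subset (t := t))))
    (fun f g h => LinearExtension.eq_of_restrict_eq hts (congrArg (fun p => p.1.1) h)
      (congrArg (fun p => p.2.1) h) (congrArg (fun p => p.2.2) h))
  rwa [Nat.card_prod, Nat.card_prod,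
    Nat.card_eq_fintype_card (α := {A : Finset (Fin s.card) // A.card = t.card}),
    Fintype.card_finset_len, Fintype.card_fin, ← mul_assoc] at this

end Restrict

section Maximals

variable [DecidableLE α]

def maximals (s : Finset α) : Finset α := {x ∈ s | ∀ y ∈ s, x ≤ y → y = x}

theorem mem_maximals : x ∈ s.maximals ↔ x ∈ s ∧ ∀ y ∈ s, x ≤ y → y = x := mem_filter

theorem LinearExtension.last_mem_maximals (f : s.LinearExtension) (hs : s.Nonempty) :
    f.last hs ∈ s.maximals := by
  refine mem_maximals.2 ⟨(f.1.symm _).2, fun y hy hle => by_contra fun hne => ?_⟩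
  have := f.2 (show f.1.symm _ < ⟨y, hy⟩ from lt_of_le_of_ne hle (Ne.symm hne ∘ congrArg _))
  rw [Equiv.apply_symm_apply] at this
  exact absurd this (not_lt.2 (Nat.le_pred_of_lt (f.1 ⟨y, hy⟩).2))

theorem numLinearExtensions_eq_sum_maximals (hs : s.Nonempty) :
    s.numLinearExtensions = ∑ x ∈ s.maximals, (s.erase x).numLinearExtensions := by
  let last (f : s.LinearExtension) : s.maximals := ⟨f.last hs, f.last_mem_maximals hs⟩
  have hfiber (x : s.maximals) :
      Nat.card {f // last f = x} = (s.erase x).numLinearExtensions := by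
    obtain ⟨hx, hmax⟩ := mem_maximals.1 x.2
    exact Nat.card_congr ((Equiv.subtypeEquivRight fun f =>
      Subtype.ext_iff.trans (f.last_eq_iff hs hx)).trans (linearExtensionEquivErase hx hmax))
  rw [numLinearExtensions, ← Nat.card_congr (Equiv.sigmaFiberEquiv last), Nat.card_sigma,
    ← sum_coe_sort s.maximals]
  exact Fintype.sum_congr _ _ hfiber

end Maximals

end Finset

/-! ### Standard tableaux and the first row -/

namespace YoungDiagram

variable {μ ν : YoungDiagram}

instance : DecidableEq YoungDiagram := fun _ _ => decidable_of_iff _ YoungDiagram.ext_iff.symm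

theorem card_le_card_of_le (h : μ ≤ ν) : μ.card ≤ ν.card :=
  Finset.card_le_card (cells_subset_iff.2 h)

theorem eq_of_le_of_card_le (h : μ ≤ ν) (hcard : ν.card ≤ μ.card) : μ = ν :=
  YoungDiagram.ext (Finset.eq_of_subset_of_card_le (cells_subset_iff.2 h) hcard)

theorem ext_of_rowLen (h : ∀ i, μ.rowLen i = ν.rowLen i) : μ = ν := by
  ext ⟨i, j⟩
  simp only [mem_cells, mem_iff_lt_rowLen, h]

theorem strictMono_iff_row_col {β : Type*} [Preorder β] {f : μ.cells → β} :
    StrictMono f ↔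
      (∀ a b : μ.cells, (a : ℕ × ℕ).1 = (b : ℕ × ℕ).1 → (a : ℕ × ℕ).2 < (b : ℕ × ℕ).2 →
        f a < f b) ∧
      (∀ a b : μ.cells, (a : ℕ × ℕ).2 = (b : ℕ × ℕ).2 → (a : ℕ × ℕ).1 < (b : ℕ × ℕ).1 →
        f a < f b) := by
  refine ⟨fun hf => ⟨fun a b h1 h2 => hf (Prod.lt_iff.2 (Or.inr ⟨h1.le, h2⟩)),
    fun a b h1 h2 => hf (Prod.lt_iff.2 (Or.inl ⟨h2, h1.le⟩))⟩, fun ⟨hrow, hcol⟩ a b hab => ?_⟩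
  obtain ⟨⟨a1, a2⟩, ha⟩ := a
  obtain ⟨⟨b1, b2⟩, hb⟩ := b
  have hc : (a1, b2) ∈ μ.cells := by
    rw [mem_cells] at hb ⊢
    exact μ.up_left_mem (Prod.mk_le_mk.1 (le_of_lt hab)).1 le_rfl hb
  have hac (h2 : a2 < b2) : f ⟨_, ha⟩ < f ⟨_, hc⟩ := hrow ⟨_, ha⟩ ⟨_, hc⟩ rfl h2
  have hcb (h1 : a1 < b1) : f ⟨_, hc⟩ < f ⟨_, hb⟩ := hcol ⟨_, hc⟩ ⟨_, hb⟩ rfl h1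
  rcases Prod.lt_iff.1 hab with ⟨h1, h2⟩ | ⟨h1, h2⟩
  · rcases h2.eq_or_lt with rfl | h2
    · exact hcb h1
    · exact (hac h2).trans (hcb h1)
  · rcases h1.eq_or_lt with rfl | h1
    · exact hac h2
    · exact (hac h2).trans (hcb h1)

theorem sytCard_eq_numLinearExtensions (μ : YoungDiagram) :
    sytCard μ = μ.cells.numLinearExtensions := by
  rw [sytCard, ← Nat.card_eq_fintype_card]
  exact Nat.card_congr (Equiv.subtypeEquivRight fun f => strictMono_iff_row_col.symm)

theorem sytCard_bot : sytCard ⊥ = 1 := by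
  rw [sytCard_eq_numLinearExtensions, cells_bot, Finset.numLinearExtensions_empty]

def shiftRow : ℕ × ℕ ↪o ℕ × ℕ :=
  OrderEmbedding.ofMapLEIff (fun c => (c.1 + 1, c.2)) fun a b => by simp [Prod.le_def]

noncomputable def tail (μ : YoungDiagram) : YoungDiagram where
  cells := μ.cells.preimage shiftRow shiftRow.injective.injOn
  isLowerSet a b hba ha := by
    simp only [Finset.coe_preimage, Set.mem_preimage, Finset.mem_coe, mem_cells] at ha ⊢
    exact μ.isLowerSet (shiftRow.monotone hba) ha

theorem mem_tail {c : ℕ × ℕ} : c ∈ μ.tail ↔ (c.1 + 1, c.2) ∈ μ := by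
  rw [← mem_cells, tail, mem_mk, Finset.mem_preimage, mem_cells]
  rfl

theorem rowLen_tail (μ : YoungDiagram) (i : ℕ) : μ.tail.rowLen i = μ.rowLen (i + 1) :=
  eq_of_forall_lt_iff fun j => by rw [← mem_iff_lt_rowLen, ← mem_iff_lt_rowLen, mem_tail]

theorem eq_of_rowLen_zero_eq_of_tail_eq (h0 : μ.rowLen 0 = ν.rowLen 0) (ht : μ.tail = ν.tail) :
    μ = ν :=
  ext_of_rowLen fun i => by
    cases i with
    | zero => exact h0
    | succ i => rw [← rowLen_tail, ← rowLen_tail, ht]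

theorem cells_sdiff_row_zero (μ : YoungDiagram) :
    μ.cells \ μ.row 0 = μ.tail.cells.map shiftRow.toEmbedding := by
  ext ⟨i, j⟩
  cases i <;> simp [row, mem_tail, shiftRow]

theorem rowLen_zero_add_card_tail (μ : YoungDiagram) : μ.rowLen 0 + μ.tail.card = μ.card := by
  have := Finset.card_sdiff_add_card_eq_card (Finset.filter_subset (·.1 = 0) μ.cells)
  rw [← row, cells_sdiff_row_zero, Finset.card_map, ← rowLen_eq_card] at this
  exact (add_comm _ _).trans this

theorem sytCard_le_choose_mul_sytCard_tail (μ : YoungDiagram) :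
    sytCard μ ≤ μ.card.choose (μ.rowLen 0) * sytCard μ.tail := by
  have hchain : IsChain (· ≤ ·) (μ.row 0 : Set (ℕ × ℕ)) := by
    rintro ⟨_, j⟩ hc ⟨_, j'⟩ hc' -
    simp only [Finset.mem_coe, mem_row_iff] at hc hc'
    obtain rfl := hc.2; obtain rfl := hc'.2
    exact (le_total j j').imp (fun h => Prod.mk_le_mk.2 ⟨le_rfl, h⟩)
      (fun h => Prod.mk_le_mk.2 ⟨le_rfl, h⟩)
  calc sytCard μ
      ≤ μ.card.choose (μ.row 0).card * (μ.row 0).numLinearExtensions *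
          (μ.cells \ μ.row 0).numLinearExtensions := by
        rw [sytCard_eq_numLinearExtensions]
        exact Finset.numLinearExtensions_le_choose_mul (Finset.filter_subset _ _)
    _ ≤ μ.card.choose (μ.rowLen 0) * 1 * sytCard μ.tail := by
        rw [← rowLen_eq_card, cells_sdiff_row_zero, Finset.numLinearExtensions_map,
          sytCard_eq_numLinearExtensions]
        gcongr
        exact Finset.numLinearExtensions_le_one hchain
    _ = μ.card.choose (μ.rowLen 0) * sytCard μ.tail := by rw [mul_one]

theorem card_tail_tail (μ : YoungDiagram) :
    μ.tail.tail.card = μ.card - μ.rowLen 0 - μ.tail.rowLen 0 := by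
  have := rowLen_zero_add_card_tail μ
  have := rowLen_zero_add_card_tail μ.tail
  omega

theorem sytCard_le_choose_mul_choose_mul_sytCard_tail_tail (μ : YoungDiagram) :
    sytCard μ ≤ μ.card.choose (μ.rowLen 0) * (μ.card - μ.rowLen 0).choose (μ.tail.rowLen 0) *
      sytCard μ.tail.tail := by
  have htail : μ.tail.card = μ.card - μ.rowLen 0 := by
    have := rowLen_zero_add_card_tail μ
    omega
  calc sytCard μ ≤ μ.card.choose (μ.rowLen 0) * sytCard μ.tail :=
        sytCard_le_choose_mul_sytCard_tail μ
    _ ≤ μ.card.choose (μ.rowLen 0) *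
        ((μ.card - μ.rowLen 0).choose (μ.tail.rowLen 0) * sytCard μ.tail.tail) := by
        rw [← htail]
        exact Nat.mul_le_mul_left _ (sytCard_le_choose_mul_sytCard_tail μ.tail)
    _ = _ := (mul_assoc _ _ _).symm

theorem tail_ofRowLens (w : List ℕ) (hw : w.SortedGE) :
    (ofRowLens w hw).tail =
      ofRowLens w.tail (List.sortedGE_iff_pairwise.2 (List.sortedGE_iff_pairwise.1 hw).tail) := by
  ext ⟨i, j⟩
  cases w <;> simp [mem_tail, mem_ofRowLens]

theorem rowLen_zero_ofRowLens (w : List ℕ) (hw : w.SortedGE) :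
    (ofRowLens w hw).rowLen 0 = w.headI := by
  cases w with
  | nil => exact eq_of_forall_lt_iff fun j => by simp [← mem_iff_lt_rowLen, mem_ofRowLens]
  | cons a w => exact rowLen_ofRowLens (w := a :: w) ⟨0, by simp⟩

theorem card_ofRowLens (w : List ℕ) (hw : w.SortedGE) : (ofRowLens w hw).card = w.sum := by
  induction w with
  | nil => rfl
  | cons a w ih =>
    rw [← rowLen_zero_add_card_tail, rowLen_zero_ofRowLens, tail_ofRowLens]
    simp [ih]

theorem sum_rowLens (μ : YoungDiagram) : μ.rowLens.sum = μ.card := by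
  conv_rhs => rw [← ofRowLens_to_rowLens_eq_self (μ := μ)]
  exact (card_ofRowLens _ _).symm

end YoungDiagram

/-! ### Young diagrams of partitions -/

open YoungDiagram

section Partitions

variable {n : ℕ}

theorem card_toYD (p : n.Partition) : (toYD p).card = n := by
  rw [toYD, card_ofRowLens, ← Multiset.sum_coe, Multiset.sort_eq, p.parts_sum]

theorem rowLens_toYD (p : n.Partition) : (toYD p).rowLens = p.parts.sort (· ≥ ·) :=
  rowLens_ofRowLens_eq_self fun _ hx => p.parts_pos ((Multiset.mem_sort _).1 hx)

theorem toYD_injective : Function.Injective (toYD (n := n)) := fun p q h =>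
  Nat.Partition.ext (by rw [← Multiset.sort_eq p.parts (· ≥ ·), ← Multiset.sort_eq q.parts (· ≥ ·),
    ← rowLens_toYD, ← rowLens_toYD, h])

theorem exists_toYD_eq {μ : YoungDiagram} (h : μ.card = n) : ∃ p : n.Partition, toYD p = μ := by
  refine ⟨⟨μ.rowLens, fun hi => μ.pos_of_mem_rowLens _ hi, by simpa [sum_rowLens] using h⟩, ?_⟩
  have hsort : Multiset.sort (↑μ.rowLens : Multiset ℕ) (· ≥ ·) = μ.rowLens := by
    rw [Multiset.coe_sort]
    exact List.mergeSort_eq_self _ (List.sortedGE_iff_pairwise.1 μ.rowLens_sorted)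
  rw [toYD]
  simp_rw [hsort]
  exact ofRowLens_to_rowLens_eq_self

theorem firstPart_eq_rowLen_zero (p : n.Partition) : firstPart p = (toYD p).rowLen 0 := by
  rw [toYD, rowLen_zero_ofRowLens, firstPart]

theorem secondPart_eq_rowLen_zero_tail (p : n.Partition) :
    secondPart p = (toYD p).tail.rowLen 0 := by
  rw [toYD, tail_ofRowLens, rowLen_zero_ofRowLens, secondPart, List.drop_one]

end Partitions

def diagramsOfCard (m : ℕ) : Finset YoungDiagram := Finset.univ.image (toYD (n := m))

theorem mem_diagramsOfCard {m : ℕ} {μ : YoungDiagram} : μ ∈ diagramsOfCard m ↔ μ.card = m := by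
  simp only [diagramsOfCard, Finset.mem_image, Finset.mem_univ, true_and]
  exact ⟨fun ⟨p, hp⟩ => hp ▸ card_toYD p, exists_toYD_eq⟩

theorem diagramsOfCard_zero : diagramsOfCard 0 = {⊥} := by
  ext μ
  rw [mem_diagramsOfCard, Finset.mem_singleton, YoungDiagram.ext_iff, cells_bot]
  exact Finset.card_eq_zero

/-! ### Covers in Young's lattice -/

namespace YoungDiagram

variable {μ ν ρ : YoungDiagram} {c : ℕ × ℕ}

/-- `μ` without the cells weakly below and right of `c`: this removes just `c` when `c` is a
maximal cell of `μ`. -/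
def eraseCell (μ : YoungDiagram) (c : ℕ × ℕ) : YoungDiagram where
  cells := {d ∈ μ.cells | ¬c ≤ d}
  isLowerSet a b hba ha := by
    simp only [Finset.coe_filter, Set.mem_ofPred_eq, mem_cells] at ha ⊢
    exact ⟨μ.isLowerSet hba ha.1, fun hcb => ha.2 (hcb.trans hba)⟩

/-- `μ` together with the cells weakly above and left of `c`: this adds just `c` when `c` is
an addable cell of `μ`. -/
def insertCell (μ : YoungDiagram) (c : ℕ × ℕ) : YoungDiagram where
  cells := μ.cells ∪ Finset.Iic c
  isLowerSet := by
    rw [Finset.coe_union, Finset.coe_Iic]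
    exact μ.isLowerSet.union (isLowerSet_Iic c)

theorem cells_eraseCell (hc : c ∈ μ.cells.maximals) :
    (μ.eraseCell c).cells = μ.cells.erase c := by
  obtain ⟨-, hmax⟩ := Finset.mem_maximals.1 hc
  ext d
  simp only [eraseCell, Finset.mem_filter, Finset.mem_erase]
  exact ⟨fun ⟨hd, hcd⟩ => ⟨fun h => hcd (h ▸ le_rfl), hd⟩,
    fun ⟨hdc, hd⟩ => ⟨hd, fun hcd => hdc (hmax d hd hcd)⟩⟩

theorem cells_insertCell (hc : ∀ d < c, d ∈ μ) : (μ.insertCell c).cells = insert c μ.cells := by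
  ext d
  simp only [insertCell, Finset.mem_union, Finset.mem_Iic, Finset.mem_insert, mem_cells]
  exact ⟨fun h => h.elim Or.inr fun hdc => hdc.eq_or_lt.imp id (hc d),
    fun h => h.elim (fun hdc => Or.inr hdc.le) Or.inl⟩

theorem exists_cells_eq_insert (h : ν ≤ μ) (hcard : μ.card = ν.card + 1) :
    ∃ c ∉ ν, μ.cells = insert c ν.cells := by
  have hsub := cells_subset_iff.2 h
  change μ.cells.card = ν.cells.card + 1 at hcard
  obtain ⟨c, hc⟩ := Finset.card_eq_one.1
    (show (μ.cells \ ν.cells).card = 1 by rw [Finset.card_sdiff_of_subset hsub]; omega)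
  refine ⟨c, fun hcν => ?_, ?_⟩
  · exact (Finset.mem_sdiff.1 ((Finset.ext_iff.1 hc c).2 (Finset.mem_singleton_self c))).2 hcν
  · rw [Finset.insert_eq, ← hc, Finset.sdiff_union_of_subset hsub]

theorem mem_maximals_cells :
    c ∈ μ.cells.maximals ↔ c.2 + 1 = μ.rowLen c.1 ∧ μ.rowLen (c.1 + 1) < μ.rowLen c.1 := by
  rw [Finset.mem_maximals, mem_cells]
  constructor
  · rintro ⟨hc, hmax⟩
    have hright : (c.1, c.2 + 1) ∉ μ := fun h => by
      simpa [Prod.ext_iff] using hmax _ h (Prod.mk_le_mk.2 ⟨le_rfl, Nat.le_succ _⟩)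
    have hbelow : (c.1 + 1, c.2) ∉ μ := fun h => by
      simpa [Prod.ext_iff] using hmax _ h (Prod.mk_le_mk.2 ⟨Nat.le_succ _, le_rfl⟩)
    rw [mem_iff_lt_rowLen] at hc hright hbelow
    omega
  · rintro ⟨h2, h1⟩
    refine ⟨mem_iff_lt_rowLen.2 (by omega), fun d hd hcd => ?_⟩
    rw [mem_cells, mem_iff_lt_rowLen] at hd
    rcases hcd.1.eq_or_lt with h | h
    · exact Prod.ext h.symm (by rw [← h] at hd; have := hcd.2; omega)
    · have := μ.rowLen_anti (c.1 + 1) d.1 (by omega); have := hcd.2; omega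

theorem forall_lt_mem_and_notMem_iff :
    ((∀ d < c, d ∈ μ) ∧ c ∉ μ) ↔
      c.2 = μ.rowLen c.1 ∧ (c.1 = 0 ∨ μ.rowLen c.1 < μ.rowLen (c.1 - 1)) := by
  obtain ⟨i, j⟩ := c
  simp only [mem_iff_lt_rowLen, not_lt]
  constructor
  · rintro ⟨hlt, hc⟩
    have hj : j ≤ μ.rowLen i := by
      by_contra! h
      have := hlt (i, μ.rowLen i) (Prod.lt_iff.2 (Or.inr ⟨le_rfl, h⟩))
      exact (mem_iff_lt_rowLen.1 this).false
    refine ⟨le_antisymm hj hc, ?_⟩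
    rcases Nat.eq_zero_or_pos i with h | h
    · exact Or.inl h
    · have := mem_iff_lt_rowLen.1 (hlt (i - 1, j) (Prod.lt_iff.2 (Or.inl ⟨by omega, le_rfl⟩)))
      exact Or.inr (by omega)
  · rintro ⟨rfl, hi⟩
    refine ⟨fun ⟨a, b⟩ hd => mem_iff_lt_rowLen.2 ?_, le_rfl⟩
    obtain ⟨ha, hb⟩ := Prod.mk_le_mk.1 hd.le
    rcases ha.eq_or_lt with rfl | ha
    · exact lt_of_le_of_ne hb fun h => hd.ne (by rw [h])
    · have := μ.rowLen_anti a (i - 1) (by omega)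
      omega

def addableRows (μ : YoungDiagram) : Finset ℕ :=
  {i ∈ Finset.range (μ.colLen 0 + 1) | i = 0 ∨ μ.rowLen i < μ.rowLen (i - 1)}

theorem mem_addableRows {i : ℕ} :
    i ∈ μ.addableRows ↔ i = 0 ∨ μ.rowLen i < μ.rowLen (i - 1) := by
  rw [addableRows, Finset.mem_filter, Finset.mem_range, and_iff_right_iff_imp]
  rintro (rfl | h)
  · omega
  · have := mem_iff_lt_colLen.1 (mem_iff_lt_rowLen.2 (show 0 < μ.rowLen (i - 1) by omega))
    omega

theorem addableRows_eq_insert :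
    μ.addableRows = insert 0 (μ.cells.maximals.image fun c => c.1 + 1) := by
  ext i
  simp only [mem_addableRows, Finset.mem_insert, Finset.mem_image, mem_maximals_cells]
  cases i with
  | zero => simp
  | succ i =>
    simp only [Nat.add_one_ne_zero, false_or, Nat.add_sub_cancel, Nat.add_right_cancel_iff]
    refine ⟨fun h => ⟨(i, μ.rowLen i - 1), ⟨by simp only; omega, h⟩, rfl⟩, ?_⟩
    rintro ⟨c, ⟨-, h⟩, rfl⟩
    exact h

theorem card_addableRows : μ.addableRows.card = μ.cells.maximals.card + 1 := by
  rw [addableRows_eq_insert, Finset.card_insert_of_notMem (by simp), Finset.card_image_of_injOn]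
  intro c hc d hd h
  rw [Finset.mem_coe, mem_maximals_cells] at hc hd
  have h1 : c.1 = d.1 := Nat.add_right_cancel h
  exact Prod.ext h1 (by rw [h1] at hc; omega)

def upperCovers (μ : YoungDiagram) : Finset YoungDiagram :=
  μ.addableRows.image fun i => μ.insertCell (i, μ.rowLen i)

def lowerCovers (μ : YoungDiagram) : Finset YoungDiagram :=
  μ.cells.maximals.image μ.eraseCell

theorem injOn_eraseCell : Set.InjOn μ.eraseCell μ.cells.maximals := by
  intro c hc d hd h
  by_contra hne
  have hd' : d ∈ (μ.eraseCell c).cells := by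
    rw [cells_eraseCell hc]
    exact Finset.mem_erase.2 ⟨hne ∘ Eq.symm, (Finset.mem_maximals.1 hd).1⟩
  rw [h, cells_eraseCell hd] at hd'
  exact Finset.notMem_erase d _ hd'

theorem injOn_insertCell :
    Set.InjOn (fun i => μ.insertCell (i, μ.rowLen i)) μ.addableRows := by
  intro i hi j hj h
  have hcell (k : ℕ) (hk : k ∈ μ.addableRows) :
      (μ.insertCell (k, μ.rowLen k)).cells = insert (k, μ.rowLen k) μ.cells :=
    cells_insertCell (forall_lt_mem_and_notMem_iff.2 ⟨rfl, mem_addableRows.1 hk⟩).1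
  have hmem := Finset.mem_insert_self (i, μ.rowLen i) μ.cells
  rw [← hcell i hi, show μ.insertCell (i, μ.rowLen i) = μ.insertCell (j, μ.rowLen j) from h,
    hcell j hj, Finset.mem_insert, mem_cells, mem_iff_lt_rowLen] at hmem
  exact hmem.elim (fun h => (Prod.ext_iff.1 h).1) fun h => absurd h (lt_irrefl _)

theorem mem_lowerCovers : ν ∈ μ.lowerCovers ↔ ν ≤ μ ∧ μ.card = ν.card + 1 := by
  rw [lowerCovers, Finset.mem_image]
  constructor
  · rintro ⟨c, hc, rfl⟩
    have hcμ := (Finset.mem_maximals.1 hc).1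
    refine ⟨cells_subset_iff.1 ?_, ?_⟩
    · rw [cells_eraseCell hc]
      exact Finset.erase_subset c μ.cells
    · change μ.cells.card = (μ.eraseCell c).cells.card + 1
      rw [cells_eraseCell hc, Finset.card_erase_add_one hcμ]
  · rintro ⟨hle, hcard⟩
    obtain ⟨c, hcν, hμ⟩ := exists_cells_eq_insert hle hcard
    have hc : c ∈ μ.cells.maximals := by
      refine Finset.mem_maximals.2 ⟨hμ ▸ Finset.mem_insert_self c _, fun d hd hcd => ?_⟩
      rw [hμ, Finset.mem_insert] at hd
      exact hd.resolve_right fun hdν => hcν (ν.isLowerSet hcd hdν)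
    refine ⟨c, hc, YoungDiagram.ext ?_⟩
    rw [cells_eraseCell hc, hμ, Finset.erase_insert (by rwa [mem_cells])]

theorem mem_upperCovers : ν ∈ μ.upperCovers ↔ μ ≤ ν ∧ ν.card = μ.card + 1 := by
  rw [upperCovers, Finset.mem_image]
  constructor
  · rintro ⟨i, hi, rfl⟩
    obtain ⟨hlt, hnot⟩ := (forall_lt_mem_and_notMem_iff (μ := μ) (c := (i, μ.rowLen i))).2
      ⟨rfl, mem_addableRows.1 hi⟩
    refine ⟨cells_subset_iff.1 ?_, ?_⟩
    · rw [cells_insertCell hlt]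
      exact Finset.subset_insert _ _
    · change (μ.insertCell _).cells.card = μ.cells.card + 1
      rw [cells_insertCell hlt, Finset.card_insert_of_notMem (by rwa [mem_cells])]
  · rintro ⟨hle, hcard⟩
    obtain ⟨c, hcμ, hν⟩ := exists_cells_eq_insert hle hcard
    have hlt : ∀ d < c, d ∈ μ := fun d hd => by
      have hdν : d ∈ ν.cells := ν.isLowerSet hd.le (hν ▸ Finset.mem_insert_self c _)
      rw [hν, Finset.mem_insert] at hdν
      exact hdν.resolve_left hd.ne
    obtain ⟨hc2, hc1⟩ := forall_lt_mem_and_notMem_iff.1 ⟨hlt, hcμ⟩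
    refine ⟨c.1, mem_addableRows.2 hc1, YoungDiagram.ext ?_⟩
    rw [← hc2, cells_insertCell hlt, hν]

theorem mem_lowerCovers_iff_mem_upperCovers : ν ∈ ρ.lowerCovers ↔ ρ ∈ ν.upperCovers := by
  rw [mem_lowerCovers, mem_upperCovers]

theorem card_upperCovers : μ.upperCovers.card = μ.lowerCovers.card + 1 := by
  rw [upperCovers, lowerCovers, Finset.card_image_of_injOn injOn_insertCell,
    Finset.card_image_of_injOn injOn_eraseCell, card_addableRows]

theorem card_sup_add_card_inf (μ ν : YoungDiagram) :
    (μ ⊔ ν).card + (μ ⊓ ν).card = μ.card + ν.card := by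
  change (μ ⊔ ν).cells.card + (μ ⊓ ν).cells.card = μ.cells.card + ν.cells.card
  rw [cells_sup, cells_inf, Finset.card_union_add_card_inter]

theorem card_lt_card_sup (hne : μ ≠ ν) (h : μ.card = ν.card) : μ.card < (μ ⊔ ν).card := by
  refine lt_of_le_of_ne (card_le_card_of_le le_sup_left) fun heq => hne ?_
  have hνμ : ν ≤ μ := (eq_of_le_of_card_le le_sup_left heq.ge) ▸ le_sup_right
  exact (eq_of_le_of_card_le hνμ h.le).symm

theorem mem_upperCovers_inter (hne : μ ≠ ν) (h : μ.card = ν.card) :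
    ρ ∈ μ.upperCovers ∩ ν.upperCovers ↔ ρ = μ ⊔ ν ∧ (μ ⊔ ν).card = μ.card + 1 := by
  have hlt := card_lt_card_sup hne h
  simp only [Finset.mem_inter, mem_upperCovers]
  constructor
  · rintro ⟨⟨hμρ, hρ⟩, hνρ, -⟩
    have hsup := sup_le hμρ hνρ
    have := card_le_card_of_le hsup
    exact ⟨(eq_of_le_of_card_le hsup (by omega)).symm, by omega⟩
  · rintro ⟨rfl, hcard⟩
    exact ⟨⟨le_sup_left, hcard⟩, le_sup_right, by omega⟩

theorem mem_lowerCovers_inter (hne : μ ≠ ν) (h : μ.card = ν.card) :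
    ρ ∈ μ.lowerCovers ∩ ν.lowerCovers ↔ ρ = μ ⊓ ν ∧ (μ ⊔ ν).card = μ.card + 1 := by
  have hlt := card_lt_card_sup hne h
  have hsum := card_sup_add_card_inf μ ν
  simp only [Finset.mem_inter, mem_lowerCovers]
  constructor
  · rintro ⟨⟨hρμ, hρ⟩, hρν, -⟩
    have hinf := le_inf hρμ hρν
    have := card_le_card_of_le hinf
    exact ⟨eq_of_le_of_card_le hinf (by omega), by omega⟩
  · rintro ⟨rfl, hcard⟩
    exact ⟨⟨inf_le_left, by omega⟩, inf_le_right, by omega⟩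

/-- The differential-poset identities `DU - UD = 1` of Young's lattice. -/
theorem card_upperCovers_inter (h : μ.card = ν.card) :
    (μ.upperCovers ∩ ν.upperCovers).card =
      (μ.lowerCovers ∩ ν.lowerCovers).card + if μ = ν then 1 else 0 := by
  by_cases hne : μ = ν
  · subst hne
    simp [card_upperCovers]
  have hup : μ.upperCovers ∩ ν.upperCovers =
      ({μ ⊔ ν} : Finset YoungDiagram).filter fun _ => (μ ⊔ ν).card = μ.card + 1 := by
    ext ρ
    rw [mem_upperCovers_inter hne h, Finset.mem_filter, Finset.mem_singleton]
  have hlow : μ.lowerCovers ∩ ν.lowerCovers =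
      ({μ ⊓ ν} : Finset YoungDiagram).filter fun _ => (μ ⊔ ν).card = μ.card + 1 := by
    ext ρ
    rw [mem_lowerCovers_inter hne h, Finset.mem_filter, Finset.mem_singleton]
  rw [hup, hlow, if_neg hne, add_zero, Finset.filter_singleton, Finset.filter_singleton]
  split_ifs <;> rfl

theorem sytCard_eq_sum_lowerCovers (hμ : 0 < μ.card) :
    sytCard μ = ∑ ν ∈ μ.lowerCovers, sytCard ν := by
  rw [lowerCovers, Finset.sum_image injOn_eraseCell, sytCard_eq_numLinearExtensions,
    Finset.numLinearExtensions_eq_sum_maximals (Finset.card_pos.1 hμ)]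
  refine Finset.sum_congr rfl fun c hc => ?_
  rw [sytCard_eq_numLinearExtensions, cells_eraseCell hc]

end YoungDiagram

/-! ### The Frobenius identity -/

namespace YoungDiagram

theorem sum_sytCard_upperCovers_eq (μ : YoungDiagram) :
    ∑ ρ ∈ μ.upperCovers, sytCard ρ =
      sytCard μ + ∑ κ ∈ μ.lowerCovers, ∑ ρ ∈ κ.upperCovers, sytCard ρ := by
  have hpos (ρ) (hρ : ρ ∈ μ.upperCovers) : 0 < ρ.card := by
    rw [(mem_upperCovers.1 hρ).2]; omega
  have hlow (ρ) (hρ : ρ ∈ μ.upperCovers) : ρ.lowerCovers ⊆ diagramsOfCard μ.card :=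
    fun ν hν => mem_diagramsOfCard.2 <| by
      have := (mem_upperCovers.1 hρ).2; have := (mem_lowerCovers.1 hν).2; omega
  have hup (κ) (hκ : κ ∈ μ.lowerCovers) : κ.upperCovers ⊆ diagramsOfCard μ.card :=
    fun ν hν => mem_diagramsOfCard.2 <| by
      have := (mem_lowerCovers.1 hκ).2; have := (mem_upperCovers.1 hν).2; omega
  rw [Finset.sum_congr rfl fun ρ hρ => sytCard_eq_sum_lowerCovers (hpos ρ hρ),
    Finset.sum_sum_eq_sum_card_filter_mul hlow, Finset.sum_sum_eq_sum_card_filter_mul hup]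
  have hfilter_up (ν : YoungDiagram) :
      {ρ ∈ μ.upperCovers | ν ∈ ρ.lowerCovers} = μ.upperCovers ∩ ν.upperCovers := by
    simp_rw [mem_lowerCovers_iff_mem_upperCovers, Finset.filter_mem_eq_inter]
  have hfilter_low (ν : YoungDiagram) :
      {κ ∈ μ.lowerCovers | ν ∈ κ.upperCovers} = μ.lowerCovers ∩ ν.lowerCovers := by
    simp_rw [← mem_lowerCovers_iff_mem_upperCovers, Finset.filter_mem_eq_inter]
  simp_rw [hfilter_up, hfilter_low]
  rw [Finset.sum_congr rfl fun ν hν => by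
    rw [card_upperCovers_inter (mem_diagramsOfCard.1 hν).symm, add_mul, ite_mul, one_mul,
      zero_mul]]
  rw [Finset.sum_add_distrib, Finset.sum_ite_eq, if_pos (mem_diagramsOfCard.2 rfl), add_comm]

theorem sum_sytCard_upperCovers (μ : YoungDiagram) :
    ∑ ρ ∈ μ.upperCovers, sytCard ρ = (μ.card + 1) * sytCard μ := by
  have ih : ∀ κ ∈ μ.lowerCovers, ∑ ρ ∈ κ.upperCovers, sytCard ρ = μ.card * sytCard κ :=
    fun κ hκ => by rw [sum_sytCard_upperCovers κ, (mem_lowerCovers.1 hκ).2]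
  rw [sum_sytCard_upperCovers_eq, Finset.sum_congr rfl ih, ← Finset.mul_sum]
  rcases Nat.eq_zero_or_pos μ.card with h | h
  · rw [h]; ring
  · rw [← sytCard_eq_sum_lowerCovers h]; ring
termination_by μ.card
decreasing_by have := (mem_lowerCovers.1 hκ).2; omega

end YoungDiagram

theorem sum_sq_sytCard (m : ℕ) : ∑ μ ∈ diagramsOfCard m, sytCard μ ^ 2 = m.factorial := by
  induction m with
  | zero => rw [diagramsOfCard_zero, Finset.sum_singleton, sytCard_bot]; rfl
  | succ m ih =>
    calc ∑ ρ ∈ diagramsOfCard (m + 1), sytCard ρ ^ 2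
        = ∑ ρ ∈ diagramsOfCard (m + 1), ∑ ν ∈ ρ.lowerCovers, sytCard ρ * sytCard ν := by
          refine Finset.sum_congr rfl fun ρ hρ => ?_
          rw [← Finset.mul_sum, ← sytCard_eq_sum_lowerCovers, sq]
          rw [mem_diagramsOfCard.1 hρ]; omega
      _ = ∑ ν ∈ diagramsOfCard m, ∑ ρ ∈ ν.upperCovers, sytCard ρ * sytCard ν := by
          refine Finset.sum_comm' fun ρ ν => ?_
          rw [mem_diagramsOfCard, mem_diagramsOfCard, mem_lowerCovers_iff_mem_upperCovers,
            mem_upperCovers]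
          exact ⟨fun ⟨_, hle, h⟩ => ⟨⟨hle, h⟩, by omega⟩,
            fun ⟨⟨hle, h⟩, _⟩ => ⟨by omega, hle, h⟩⟩
      _ = ∑ ν ∈ diagramsOfCard m, (m + 1) * sytCard ν ^ 2 := by
          refine Finset.sum_congr rfl fun ν hν => ?_
          rw [← Finset.sum_mul, sum_sytCard_upperCovers, mem_diagramsOfCard.1 hν]
          ring
      _ = (m + 1).factorial := by rw [← Finset.mul_sum, ih, Nat.factorial_succ]

/-- For partitions of `n` with prescribed first two parts `λ₁, λ₂`, the sum of squared
dimensions satisfies `∑ d_λ² ≤ C(n,λ₁)² C(n−λ₁,λ₂)² (n−λ₁−λ₂)!`. -/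
theorem stmt11 (n l1 l2 : ℕ) :
    ∑ p ∈ Finset.univ.filter
        (fun p : Nat.Partition n => firstPart p = l1 ∧ secondPart p = l2),
      (sytCard (toYD p)) ^ 2 ≤
      (n.choose l1) ^ 2 * ((n - l1).choose l2) ^ 2 * (n - l1 - l2).factorial := by
  set S := Finset.univ.filter fun p : Nat.Partition n => firstPart p = l1 ∧ secondPart p = l2
  have hrows (p) (hp : p ∈ S) : (toYD p).rowLen 0 = l1 ∧ (toYD p).tail.rowLen 0 = l2 := by
    rw [← firstPart_eq_rowLen_zero, ← secondPart_eq_rowLen_zero_tail]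
    exact (Finset.mem_filter.1 hp).2
  have hinj : Set.InjOn (fun p => (toYD p).tail.tail) S := fun p hp q hq h =>
    toYD_injective <| eq_of_rowLen_zero_eq_of_tail_eq ((hrows p hp).1.trans (hrows q hq).1.symm) <|
      eq_of_rowLen_zero_eq_of_tail_eq ((hrows p hp).2.trans (hrows q hq).2.symm) h
  have hcard : S.image (fun p => (toYD p).tail.tail) ⊆ diagramsOfCard (n - l1 - l2) :=
    Finset.image_subset_iff.2 fun p hp => mem_diagramsOfCard.2 <| by
      rw [card_tail_tail, card_toYD, (hrows p hp).1, (hrows p hp).2]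
  calc ∑ p ∈ S, sytCard (toYD p) ^ 2
      ≤ ∑ p ∈ S, (n.choose l1 * (n - l1).choose l2 * sytCard (toYD p).tail.tail) ^ 2 :=
        Finset.sum_le_sum fun p hp => Nat.pow_le_pow_left (by
          simpa only [card_toYD, hrows p hp] using
            sytCard_le_choose_mul_choose_mul_sytCard_tail_tail (toYD p)) 2
    _ = (n.choose l1) ^ 2 * ((n - l1).choose l2) ^ 2 *
        ∑ μ ∈ S.image (fun p => (toYD p).tail.tail), sytCard μ ^ 2 := by
        simp_rw [Finset.sum_image hinj, Finset.mul_sum, mul_pow]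
    _ ≤ (n.choose l1) ^ 2 * ((n - l1).choose l2) ^ 2 * (n - l1 - l2).factorial := by
        rw [← sum_sq_sytCard]
        gcongr
end
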